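/- Every analytic filter on ℕ containing the Fréchét filter, viewed as a subset of Cantor space 2^ℕ, is meager in 2^ℕ. -/

import Mathlib

/-!
Analytic sets have the Baire property. Write `A = f '' ℕ^ℕ` and `A_s = f '' [s]` for finite
sequences `s`, and let `B_s ⊆ closure A_s` be a Baire measurable hull of `A_s`: every Baire
measurable subset of `B_s \ A_s` is meagre. Since `A_s = ⋃ a, A_{s⌢a}`, the sets
`B_s \ ⋃ a, B_{s⌢a}` are meagre, and a point of `B_∅` outside all of them lies in
`closure (f '' [x|n])` for every `n` along some branch `x`, hence equals `f x`.

A Baire measurable set of sequences that is invariant under finite modifications is meagre or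
comeagre: if not meagre it is comeagre in some cylinder, and swapping finitely many coordinates
carries that cylinder onto any other. The image of a filter containing the cofinite sets is such
a set. If it were comeagre, so would be its image under complementation, and the two would meet
in some `A` with both `A` and `ℕ \ A` in the filter.
-/

open Classical in
/-- The identification of subsets of ℕ with points of Cantor space. -/
noncomputable def chi (A : Set ℕ) : ℕ → Bool := fun n => if n ∈ A then true else false

open Set Topology Filter PiNat

section BaireHull

variable {X : Type*} [TopologicalSpace X]

lemma isMeagre_sdiff_of_residualEq {s t : Set X} (h : s =ᵇ t) : IsMeagre (s \ t) := by
  rw [IsMeagre]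
  filter_upwards [h.mem_iff] with x hx
  simp [hx]

def meagreLocus (S : Set X) : Set X := ⋃₀ {U | IsOpen U ∧ IsMeagre (U ∩ S)}

def baireHull (S : Set X) : Set X := (closure S \ meagreLocus S) ∪ (meagreLocus S ∩ S)

lemma isOpen_meagreLocus (S : Set X) : IsOpen (meagreLocus S) :=
  isOpen_sUnion fun _ hU => hU.1

lemma isMeagre_meagreLocus_inter [SecondCountableTopology X] (S : Set X) :
    IsMeagre (meagreLocus S ∩ S) := by
  obtain ⟨T, hTc, hTsub, hTeq⟩ :=
    TopologicalSpace.isOpen_sUnion_countable {U | IsOpen U ∧ IsMeagre (U ∩ S)} fun _ hU => hU.1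
  rw [meagreLocus, ← hTeq, sUnion_eq_biUnion, iUnion₂_inter]
  exact isMeagre_biUnion hTc fun U hU => (hTsub hU).2

lemma subset_baireHull (S : Set X) : S ⊆ baireHull S := fun x hx => by
  by_cases hxL : x ∈ meagreLocus S
  · exact Or.inr ⟨hxL, hx⟩
  · exact Or.inl ⟨subset_closure hx, hxL⟩

lemma baireHull_subset_closure (S : Set X) : baireHull S ⊆ closure S :=
  union_subset sdiff_subset (inter_subset_right.trans subset_closure)

lemma baireMeasurableSet_baireHull [SecondCountableTopology X] (S : Set X) :
    BaireMeasurableSet (baireHull S) :=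
  (isClosed_closure.sdiff (isOpen_meagreLocus S)).isOpen_compl.baireMeasurableSet.of_compl.union
    (isMeagre_meagreLocus_inter S).baireMeasurableSet

lemma isMeagre_of_subset_baireHull {S Z : Set X} (hZ : BaireMeasurableSet Z)
    (hZS : Disjoint Z S) (hZhull : Z ⊆ baireHull S) : IsMeagre Z := by
  obtain ⟨U, hUo, hZU⟩ := hZ.residualEq_isOpen
  have hUS : IsMeagre (U ∩ S) := (isMeagre_sdiff_of_residualEq hZU.symm).mono
    fun x hx => mem_sdiff_of_mem hx.1 (hZS.notMem_of_mem_right hx.2)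
  have hU_locus : U ⊆ meagreLocus S := fun x hx => ⟨U, ⟨hUo, hUS⟩, hx⟩
  refine (isMeagre_sdiff_of_residualEq hZU).mono fun x hx => mem_sdiff_of_mem hx fun hxU => ?_
  rcases hZhull hx with h | h
  · exact h.2 (hU_locus hxU)
  · exact hZS.notMem_of_mem_left hx h.2

lemma isMeagre_of_forall_exists_isOpen [SecondCountableTopology X] {T : Set X}
    (h : ∀ x ∈ T, ∃ U, IsOpen U ∧ x ∈ U ∧ IsMeagre (U ∩ T)) : IsMeagre T :=
  (isMeagre_meagreLocus_inter T).mono fun x hx => by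
    obtain ⟨U, hUo, hxU, hUT⟩ := h x hx
    exact ⟨⟨U, ⟨hUo, hUT⟩, hxU⟩, hx⟩

lemma BaireMeasurableSet.of_subset_of_isMeagre_sdiff {s t : Set X} (ht : BaireMeasurableSet t)
    (hst : s ⊆ t) (h : IsMeagre (t \ s)) : BaireMeasurableSet s :=
  sdiff_sdiff_cancel_left hst ▸ ht.diff h.baireMeasurableSet

end BaireHull

-- `res x n` lists `x (n - 1), …, x 0`, so a prefix `s` is extended to `a :: s`.
def prefixCylinder {α : Type*} (s : List α) : Set (ℕ → α) := {z | res z s.length = s}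

section PrefixCylinder

variable {α : Type*}

@[simp]
lemma prefixCylinder_nil : prefixCylinder ([] : List α) = univ := by
  simp [prefixCylinder]

lemma iUnion_prefixCylinder_cons (s : List α) :
    ⋃ a, prefixCylinder (a :: s) = prefixCylinder s := by
  ext z
  simp [prefixCylinder, res_succ]

lemma prefixCylinder_res (x : ℕ → α) (n : ℕ) : prefixCylinder (res x n) = cylinder x n := by
  rw [cylinder_eq_res, prefixCylinder, res_length]

lemma exists_forall_res_of_forall_exists_cons {P : List α → Prop} (h₀ : P [])
    (h : ∀ s, P s → ∃ a, P (a :: s)) : ∃ x : ℕ → α, ∀ n, P (res x n) := by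
  choose next hnext using h
  let branch : ℕ → {s // P s} :=
    fun n => Nat.rec ⟨[], h₀⟩ (fun _ s => ⟨next s.1 s.2 :: s.1, hnext s.1 s.2⟩) n
  refine ⟨fun n => next _ (branch n).2, fun n => ?_⟩
  suffices res (fun n => next _ (branch n).2) n = (branch n).1 from this ▸ (branch n).2
  induction n with
  | zero => rfl
  | succ n ih => rw [res_succ, ih]

end PrefixCylinder

lemma eq_of_forall_mem_closure_image_cylinder {α X : Type*} [TopologicalSpace α]
    [DiscreteTopology α] [TopologicalSpace X] [T2Space X] {f : (ℕ → α) → X}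
    (hf : Continuous f) {x : ℕ → α} {y : X}
    (h : ∀ n, y ∈ closure (f '' cylinder x n)) : y = f x := by
  by_contra hne
  obtain ⟨V, U, hVo, hUo, hyV, hxU, hVU⟩ := t2_separation hne
  obtain ⟨_, ⟨_, n, rfl⟩, hxn, hn⟩ :=
    (isTopologicalBasis_cylinders fun _ => α).exists_subset_of_mem_open (mem_preimage.2 hxU)
      (hUo.preimage hf)
  rw [← mem_cylinder_iff_eq.1 hxn] at hn
  have hcl : closure (f '' cylinder x n) ⊆ closure U := closure_mono (image_subset_iff.2 hn)
  exact hVU.closure_right hVo |>.notMem_of_mem_left hyV (hcl (h n))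

theorem MeasureTheory.AnalyticSet.baireMeasurableSet {X : Type*} [TopologicalSpace X]
    [SecondCountableTopology X] [T2Space X] {A : Set X} (hA : MeasureTheory.AnalyticSet A) :
    BaireMeasurableSet A := by
  rw [MeasureTheory.AnalyticSet] at hA
  rcases hA with rfl | ⟨f, hf, rfl⟩
  · exact IsMeagre.empty.baireMeasurableSet
  set B : List ℕ → Set X := fun s => baireHull (f '' prefixCylinder s)
  have hB : ∀ s, BaireMeasurableSet (B s) := fun s => baireMeasurableSet_baireHull _
  have hAB : ∀ s, f '' prefixCylinder s ⊆ B s := fun s => subset_baireHull _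
  set E : List ℕ → Set X := fun s => B s \ ⋃ a, B (a :: s)
  have hE : ∀ s, IsMeagre (E s) := by
    intro s
    refine isMeagre_of_subset_baireHull ((hB s).diff (.iUnion fun a => hB _)) ?_ sdiff_subset
    rw [← iUnion_prefixCylinder_cons, image_iUnion]
    exact disjoint_sdiff_left.mono_right (iUnion_mono fun a => hAB (a :: s))
  have hB_sdiff : IsMeagre (B [] \ range f) := by
    refine (isMeagre_iUnion hE).mono fun y ⟨hy, hyf⟩ => ?_
    by_contra hyE
    obtain ⟨x, hx⟩ : ∃ x : ℕ → ℕ, ∀ n, y ∈ B (res x n) := by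
      refine exists_forall_res_of_forall_exists_cons (P := fun s => y ∈ B s) hy fun s hs => ?_
      by_contra! h
      exact hyE (mem_iUnion.2 ⟨s, hs, by simpa using h⟩)
    refine hyf ⟨x, (eq_of_forall_mem_closure_image_cylinder hf fun n => ?_).symm⟩
    rw [← prefixCylinder_res]
    exact baireHull_subset_closure _ (hx n)
  exact (hB []).of_subset_of_isMeagre_sdiff (by simpa [image_univ] using hAB []) hB_sdiff

section ZeroOneLaw

variable {α : Type*} [TopologicalSpace α] [DiscreteTopology α]

def prefixSwap [DecidableEq α] (x y : ℕ → α) (n : ℕ) : (ℕ → α) ≃ₜ (ℕ → α) :=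
  Homeomorph.piCongrRight fun i =>
    if i < n then (Equiv.swap (x i) (y i)).toHomeomorphOfDiscrete else Homeomorph.refl α

lemma prefixSwap_mem_cylinder [DecidableEq α] {x y z : ℕ → α} {n : ℕ}
    (hz : z ∈ cylinder x n) : prefixSwap x y n z ∈ cylinder y n := fun i hi => by
  simp [prefixSwap, Equiv.toHomeomorphOfDiscrete, hi, hz i hi]

lemma prefixSwap_eventuallyEq [DecidableEq α] (x y z : ℕ → α) (n : ℕ) :
    prefixSwap x y n z =ᶠ[cofinite] z := by
  refine eventually_cofinite.2 ((finite_lt_nat n).subset fun i hi => ?_)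
  exact show i < n from not_le.1 fun hni => hi (by simp [prefixSwap, not_lt.2 hni])

theorem isMeagre_or_isMeagre_compl_of_eventuallyEq_invariant [Countable α] {S : Set (ℕ → α)}
    (hS : BaireMeasurableSet S) (hinv : ∀ x y, x =ᶠ[cofinite] y → x ∈ S → y ∈ S) :
    IsMeagre S ∨ IsMeagre Sᶜ := by
  classical
  refine or_iff_not_imp_left.2 fun hSm => ?_
  obtain ⟨U, hUo, hSU⟩ := hS.residualEq_isOpen
  obtain ⟨v, hv⟩ : U.Nonempty := nonempty_iff_ne_empty.2 fun hU =>
    hSm (by simpa [hU] using isMeagre_sdiff_of_residualEq hSU)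
  obtain ⟨_, ⟨w, n, rfl⟩, hvn, hnU⟩ :=
    (isTopologicalBasis_cylinders fun _ => α).exists_subset_of_mem_open hv hUo
  rw [← mem_cylinder_iff_eq.1 hvn] at hnU
  have hv_cyl : IsMeagre (cylinder v n \ S) :=
    (isMeagre_sdiff_of_residualEq hSU.symm).mono (sdiff_subset_sdiff_left hnU)
  refine isMeagre_of_forall_exists_isOpen fun x _ =>
    ⟨cylinder x n, isOpen_cylinder _ x n, self_mem_cylinder x n, ?_⟩
  let h := prefixSwap x v n
  refine (hv_cyl.preimage_of_isOpenMap h.continuous h.isOpenMap).mono fun z ⟨hz, hzS⟩ => ?_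
  exact ⟨prefixSwap_mem_cylinder hz, fun hhz => hzS (hinv _ _ (prefixSwap_eventuallyEq ..) hhz)⟩

end ZeroOneLaw

@[simp]
lemma chi_apply_eq_true {A : Set ℕ} {n : ℕ} : chi A n = true ↔ n ∈ A := by
  simp [chi]

lemma chi_setOf (x : ℕ → Bool) : chi {n | x n = true} = x := by
  ext n
  simp [chi]

lemma chi_compl (A : Set ℕ) : chi Aᶜ = fun n => !chi A n := by
  ext n
  by_cases hn : n ∈ A <;> simp [chi, hn]

lemma chi_injective : Function.Injective chi := fun A B h => by
  ext n
  rw [← chi_apply_eq_true, h, chi_apply_eq_true]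

section FilterImage

variable {F : Filter ℕ}

lemma mem_chi_image_sets_of_eventuallyEq (hF : F ≤ cofinite) {x y : ℕ → Bool}
    (hxy : x =ᶠ[cofinite] y) (hx : x ∈ chi '' F.sets) : y ∈ chi '' F.sets := by
  obtain ⟨A, hA, rfl⟩ := hx
  refine ⟨{n | y n = true}, (congr_sets (hF ?_)).1 hA, chi_setOf y⟩
  filter_upwards [hxy] with n hn
  simp [← hn]

lemma disjoint_chi_image_sets_preimage_not [F.NeBot] :
    Disjoint (chi '' F.sets) ((fun x n => !x n) ⁻¹' (chi '' F.sets)) := by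
  refine disjoint_left.2 ?_
  rintro _ ⟨A, hA, rfl⟩ ⟨B, hB, hBA⟩
  exact compl_notMem hA (chi_injective (hBA.trans (chi_compl A).symm) ▸ hB)

end FilterImage

theorem analytic_filter_meager
    (F : Filter ℕ) (hFne : F.NeBot) (hext : F ≤ Filter.cofinite)
    (hA : MeasureTheory.AnalyticSet (chi '' F.sets)) :
    IsMeagre (chi '' F.sets) := by
  refine (isMeagre_or_isMeagre_compl_of_eventuallyEq_invariant hA.baireMeasurableSet
    fun _ _ => mem_chi_image_sets_of_eventuallyEq hext).resolve_right fun hc => ?_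
  let flip : (ℕ → Bool) ≃ₜ (ℕ → Bool) :=
    Homeomorph.piCongrRight fun _ => Equiv.boolNot.toHomeomorphOfDiscrete
  have hS : chi '' F.sets ∈ residual _ := compl_compl (chi '' F.sets) ▸ hc
  have hflipS : flip ⁻¹' (chi '' F.sets) ∈ residual _ := by
    simpa [IsMeagre] using hc.preimage_of_isOpenMap flip.continuous flip.isOpenMap
  have hdisj : chi '' F.sets ∩ flip ⁻¹' (chi '' F.sets) = ∅ :=
    disjoint_chi_image_sets_preimage_not.inter_eq
  exact not_isMeagre_of_mem_residual (inter_mem hS hflipS) (hdisj ▸ IsMeagre.empty)
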